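/- arXiv:1903.03802 — 2 statements merged into one kernel-verified Lean document; each statement's English description precedes it below -/
import Mathlib

section
/- If QIF1(o) = QIF2(o) for every o ∈ O with p(o) > 0, and every s ∈ S has p(s) > 0, then the channel is deterministic: each s ∈ S has at most one o ∈ O with p(s,o) > 0. -/
/-!
Equality of the two leakage measures at an output `o` says that the prior mass of the inputs
that can produce `o` equals `p(o) = ∑ₛ p(s,o)`. Since `p(s,o) ≤ p(s)` termwise, this forces
`p(s,o) = p(s)` for every such input `s`, i.e. the whole row of `s` is concentrated on `o`.
-/

section

open Finset

variable {ι M : Type*} [Fintype ι] [AddCommMonoid M] [PartialOrder M] [IsOrderedCancelAddMonoid M]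

theorem eq_of_apply_eq_sum_of_pos {f : ι → M} (hf : ∀ i, 0 ≤ f i) {a b : ι}
    (ha : f a = ∑ i, f i) (hb : 0 < f b) : b = a := by
  classical
  by_contra hba
  have hpair : f a + f b ≤ ∑ i, f i := by
    rw [← sum_pair (Ne.symm hba)]
    exact sum_le_sum_of_subset_of_nonneg (subset_univ _) fun i _ _ => hf i
  rw [← ha, add_le_iff_nonpos_right] at hpair
  exact hpair.not_gt hb

theorem eq_of_sum_filter_pos_eq_sum [DecidableLT M] {f g : ι → M} (hf : ∀ i, 0 ≤ f i)
    (hfg : ∀ i, f i ≤ g i)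
    (h : ∑ i ∈ univ.filter (fun i => 0 < f i), g i = ∑ i, f i) {i : ι} (hi : 0 < f i) :
    f i = g i := by
  have hf_support : ∑ i ∈ univ.filter (fun i => 0 < f i), f i = ∑ i, f i :=
    sum_filter_of_ne fun j _ hj => (hf j).lt_of_ne' hj
  rw [← hf_support] at h
  exact (sum_eq_sum_iff_of_le fun j _ => hfg j).mp h.symm i (mem_filter.mpr ⟨mem_univ i, hi⟩)

end

theorem deterministic_of_qif1_eq_qif2_general {S O : Type*} [Fintype S] [Fintype O]
    (p : S → O → ℝ)
    (hnn : ∀ s o, 0 ≤ p s o)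
    (hpriorpos : ∀ s, 0 < ∑ o', p s o')
    (heq : ∀ o, 0 < ∑ s, p s o →
      -Real.logb 2 (∑ s ∈ Finset.univ.filter (fun s => 0 < p s o), ∑ o', p s o') =
        -Real.logb 2 (∑ s, p s o)) :
    ∀ s, ∀ o₁ o₂, 0 < p s o₁ → 0 < p s o₂ → o₁ = o₂ := by
  intro s o₁ o₂ h₁ h₂
  have hout_pos : 0 < ∑ s', p s' o₁ :=
    h₁.trans_le (Finset.single_le_sum (fun s' _ => hnn s' o₁) (Finset.mem_univ s))
  have hpre_pos : 0 < ∑ s' ∈ Finset.univ.filter (fun s' => 0 < p s' o₁), ∑ o', p s' o' :=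
    Finset.sum_pos (fun s' _ => hpriorpos s')
      ⟨s, Finset.mem_filter.mpr ⟨Finset.mem_univ s, h₁⟩⟩
  have hpre_eq : ∑ s' ∈ Finset.univ.filter (fun s' => 0 < p s' o₁), ∑ o', p s' o' =
      ∑ s', p s' o₁ :=
    Real.logb_injOn_pos (by norm_num) hpre_pos hout_pos (neg_injective (heq o₁ hout_pos))
  have hrow : p s o₁ = ∑ o', p s o' :=
    eq_of_sum_filter_pos_eq_sum (hnn · o₁)
      (fun s' => Finset.single_le_sum (fun o' _ => hnn s' o') (Finset.mem_univ o₁)) hpre_eq h₁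
  exact (eq_of_apply_eq_sum_of_pos (hnn s) hrow h₂).symm

/-- If `QIF1(o) = QIF2(o)` for every output `o` with `p(o) > 0`, and every input
has positive prior probability, then the channel is deterministic: each `s` has at
most one `o` with `p(s,o) > 0`. -/
theorem deterministic_of_qif1_eq_qif2 {S O : Type*} [Fintype S] [Fintype O]
    (p : S → O → ℝ)
    (hnn : ∀ s o, 0 ≤ p s o)
    (hsum : ∑ s, ∑ o, p s o = 1)
    (hpriorpos : ∀ s, 0 < ∑ o', p s o')
    (heq : ∀ o, 0 < ∑ s, p s o →
      -Real.logb 2 (∑ s ∈ Finset.univ.filter (fun s => 0 < p s o), ∑ o', p s o') =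
        -Real.logb 2 (∑ s, p s o)) :
    ∀ s, ∀ o₁ o₂, 0 < p s o₁ → 0 < p s o₂ → o₁ = o₂ :=
  deterministic_of_qif1_eq_qif2_general p hnn hpriorpos heq
end

section
/- There exists a probabilistic channel for which the entropy-based dynamic leakage QIFdyn(o) = H(S) - H(S|o) is strictly negative for some output o. Concretely, with S = {s1, s2, s3}, priors p(s1) = 0.875, p(s2) = p(s3) = 0.0625, and the deterministic map f(s1) = a, f(s2) = f(s3) = b, one has H(S) - H(S|b) < 0. -/
/-!
Observing `b` rules out the likely secret `s1` and leaves two equally likely ones, so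
`H(S|b) = 1`, whereas `H(S) = 17/8 - (7/8) log₂ 7 < 1` because `2^17 < 7^7`.
-/

open Real

theorem lt_logb_of_pow_lt {b x : ℝ} {m n : ℕ} (hb : 1 < b) (hx : 0 < x) (hn : 0 < n)
    (h : b ^ m < x ^ n) : (m : ℝ) / n < logb b x := by
  have hlog := (logb_lt_logb_iff hb (by positivity) (by positivity)).2 h
  rw [logb_pow, logb_pow, logb_self_eq_one hb, mul_one] at hlog
  rwa [div_lt_iff₀' (by positivity)]

/-- The entropy-based dynamic leakage `QIFdyn(o) = H(S) - H(S|o)` can be strictly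
negative: with priors `7/8, 1/16, 1/16` and the deterministic map sending the first
input to `a` and the other two to `b`, observing `b` gives posterior `(0, 1/2, 1/2)`
and `H(S) - H(S|b) < 0`. -/
theorem qifdyn_can_be_negative :
    (-(7/8 * Real.logb 2 (7/8) + 1/16 * Real.logb 2 (1/16) + 1/16 * Real.logb 2 (1/16)))
    - (-(1/2 * Real.logb 2 (1/2) + 1/2 * Real.logb 2 (1/2))) < 0 := by
  have h7 : (17 : ℝ) / 7 < logb 2 7 := by
    exact_mod_cast lt_logb_of_pow_lt (m := 17) (n := 7) (by norm_num) (by norm_num) (by norm_num)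
      (by norm_num)
  have h78 : logb 2 (7/8 : ℝ) = logb 2 7 - 3 := by
    rw [logb_div (by norm_num) (by norm_num), show (8 : ℝ) = 2 ^ (3 : ℕ) by norm_num, logb_pow]
    simp
  have h16 : logb 2 (1/16 : ℝ) = -4 := by
    rw [logb_eq_iff_rpow_eq (by norm_num) (by norm_num) (by norm_num)]
    norm_num
  have h2 : logb 2 (1/2 : ℝ) = -1 := by
    rw [logb_eq_iff_rpow_eq (by norm_num) (by norm_num) (by norm_num)]
    norm_num
  rw [h78, h16, h2]
  linarith
end
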